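/- arXiv:1701.01595 — 2 statements merged into one kernel-verified Lean document; each statement's English description precedes it below -/
import Mathlib

section
/- The scaling functions α̂, β̂¹, β̂² satisfy the refinement equations α̂(2ξ) = â(ξ)α̂(ξ), β̂¹(2ξ) = b̂₁(ξ)α̂(ξ), and β̂²(2ξ) = b̂₂(ξ)α̂(ξ) for all ξ with 0 ≤ ξ ≤ 1/2. -/
noncomputable def nu (t : ℝ) : ℝ := t ^ 4 * (35 - 84 * t + 70 * t ^ 2 - 20 * t ^ 3)

/-- The low-pass mask Fourier series `â`. -/
noncomputable def ahat (ξ : ℝ) : ℝ :=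
  if |ξ| < 1 / 8 then 1
  else if |ξ| ≤ 1 / 4 then Real.cos (Real.pi / 2 * nu (8 * |ξ| - 1))
  else 0

/-- The first high-pass mask Fourier series `b̂₁`. -/
noncomputable def b1hat (ξ : ℝ) : ℝ :=
  if |ξ| < 1 / 8 then 0
  else if |ξ| ≤ 1 / 4 then Real.sin (Real.pi / 2 * nu (8 * |ξ| - 1))
  else if |ξ| ≤ 1 / 2 then Real.cos (Real.pi / 2 * nu (4 * |ξ| - 1))
  else 0

/-- The second high-pass mask Fourier series `b̂₂`. -/
noncomputable def b2hat (ξ : ℝ) : ℝ :=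
  if |ξ| < 1 / 4 then 0
  else if |ξ| ≤ 1 / 2 then Real.sin (Real.pi / 2 * nu (4 * |ξ| - 1))
  else 0

/-- The low-pass scaling function `α̂`. -/
noncomputable def alphahat (ξ : ℝ) : ℝ :=
  if |ξ| < 1 / 4 then 1
  else if |ξ| ≤ 1 / 2 then Real.cos (Real.pi / 2 * nu (4 * |ξ| - 1))
  else 0

/-- The first high-pass framelet generator `β̂¹`. -/
noncomputable def beta1hat (ξ : ℝ) : ℝ :=
  if 1 / 4 ≤ |ξ| ∧ |ξ| < 1 / 2 then Real.sin (Real.pi / 2 * nu (4 * |ξ| - 1))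
  else if 1 / 2 ≤ |ξ| ∧ |ξ| ≤ 1 then Real.cos (Real.pi / 2 * nu (2 * |ξ| - 1)) ^ 2
  else 0

/-- The second high-pass framelet generator `β̂²`. -/
noncomputable def beta2hat (ξ : ℝ) : ℝ :=
  if 1 / 2 ≤ |ξ| ∧ |ξ| ≤ 1 then
    Real.cos (Real.pi / 2 * nu (2 * |ξ| - 1)) * Real.sin (Real.pi / 2 * nu (2 * |ξ| - 1))
  else 0

theorem refinement_equations :
    ∀ ξ : ℝ, 0 ≤ ξ → ξ ≤ 1 / 2 →
      alphahat (2 * ξ) = ahat ξ * alphahat ξ ∧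
      beta1hat (2 * ξ) = b1hat ξ * alphahat ξ ∧
      beta2hat (2 * ξ) = b2hat ξ * alphahat ξ := by
  intro ξ h0 h1
  have ha : |ξ| = ξ := abs_of_nonneg h0
  have ha2 : |2 * ξ| = 2 * ξ := abs_of_nonneg (by linarith)
  rcases lt_or_ge ξ (1/8) with h | h
  · -- ξ < 1/8
    have e1 : alphahat (2*ξ) = 1 := by
      simp only [alphahat, ha2]; rw [if_pos (by linarith)]
    have e2 : ahat ξ = 1 := by
      simp only [ahat, ha]; rw [if_pos (by linarith)]
    have e3 : alphahat ξ = 1 := by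
      simp only [alphahat, ha]; rw [if_pos (by linarith)]
    have e4 : b1hat ξ = 0 := by
      simp only [b1hat, ha]; rw [if_pos (by linarith)]
    have e5 : beta1hat (2*ξ) = 0 := by
      simp only [beta1hat, ha2]
      rw [if_neg (by rintro ⟨h1, -⟩; linarith), if_neg (by rintro ⟨h1, -⟩; linarith)]
    have e6 : beta2hat (2*ξ) = 0 := by
      simp only [beta2hat, ha2]
      rw [if_neg (by rintro ⟨h1, -⟩; linarith)]
    have e7 : b2hat ξ = 0 := by
      simp only [b2hat, ha]; rw [if_pos (by linarith)]
    refine ⟨?_, ?_, ?_⟩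
    · rw [e1, e2, e3]; norm_num
    · rw [e5, e4, zero_mul]
    · rw [e6, e7, zero_mul]
  rcases lt_or_ge ξ (1/4) with h2 | h2
  · -- 1/8 ≤ ξ < 1/4
    have e1 : alphahat (2*ξ) = Real.cos (Real.pi / 2 * nu (4 * (2*ξ) - 1)) := by
      simp only [alphahat, ha2]
      rw [if_neg (by push_neg; linarith), if_pos (by linarith)]
    have e2 : ahat ξ = Real.cos (Real.pi / 2 * nu (8 * ξ - 1)) := by
      simp only [ahat, ha]
      rw [if_neg (by push_neg; linarith), if_pos (by linarith)]
    have e3 : alphahat ξ = 1 := by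
      simp only [alphahat, ha]; rw [if_pos (by linarith)]
    have e4 : b1hat ξ = Real.sin (Real.pi / 2 * nu (8 * ξ - 1)) := by
      simp only [b1hat, ha]
      rw [if_neg (by push_neg; linarith), if_pos (by linarith)]
    have e5 : beta1hat (2*ξ) = Real.sin (Real.pi / 2 * nu (4 * (2*ξ) - 1)) := by
      simp only [beta1hat, ha2]
      rw [if_pos ⟨by linarith, by linarith⟩]
    have e6 : beta2hat (2*ξ) = 0 := by
      simp only [beta2hat, ha2]
      rw [if_neg (by rintro ⟨hx, -⟩; linarith)]
    have e7 : b2hat ξ = 0 := by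
      simp only [b2hat, ha]; rw [if_pos (by linarith)]
    have harg : 4 * (2*ξ) - 1 = 8 * ξ - 1 := by ring
    refine ⟨?_, ?_, ?_⟩
    · rw [e1, e2, e3, harg, mul_one]
    · rw [e5, e4, e3, harg, mul_one]
    · rw [e6, e7, zero_mul]
  rcases h2.eq_or_lt with heq | h2
  · -- ξ = 1/4
    subst heq
    have hq : |(1:ℝ)/4| = 1/4 := by norm_num
    have hq2 : |2 * ((1:ℝ)/4)| = 1/2 := by rw [ha2]; norm_num
    have hnu0 : nu 0 = 0 := by norm_num [nu]
    have hnu1 : nu 1 = 1 := by norm_num [nu]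
    have c1 : Real.cos (Real.pi / 2 * nu (4 * (1/2) - 1)) = 0 := by
      norm_num [hnu1, Real.cos_pi_div_two]
    have c0 : Real.cos (Real.pi / 2 * nu (2 * (1/2) - 1)) = 1 := by
      norm_num [hnu0, Real.cos_zero]
    refine ⟨?_, ?_, ?_⟩
    · simp only [alphahat, ahat, hq, hq2]
      rw [if_neg (by norm_num), if_pos (by norm_num), if_neg (by norm_num),
        if_pos (by norm_num), if_neg (by norm_num), if_pos (by norm_num)]
      norm_num [hnu0, hnu1, Real.cos_pi_div_two]
    · simp only [beta1hat, b1hat, alphahat, hq, hq2]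
      rw [if_neg (by norm_num), if_pos (by norm_num), if_neg (by norm_num),
        if_pos (by norm_num), if_neg (by norm_num), if_pos (by norm_num)]
      norm_num [hnu0, hnu1, Real.sin_pi_div_two, Real.cos_zero]
    · simp only [beta2hat, b2hat, alphahat, hq, hq2]
      rw [if_pos (by norm_num), if_neg (by norm_num), if_pos (by norm_num),
        if_neg (by norm_num), if_pos (by norm_num)]
      norm_num [hnu0, Real.sin_zero]
  · -- 1/4 < ξ ≤ 1/2
    have e1 : alphahat (2*ξ) = 0 := by
      simp only [alphahat, ha2]
      rw [if_neg (by push_neg; linarith), if_neg (by push_neg; linarith)]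
    have e2 : ahat ξ = 0 := by
      simp only [ahat, ha]
      rw [if_neg (by push_neg; linarith), if_neg (by push_neg; linarith)]
    have e3 : alphahat ξ = Real.cos (Real.pi / 2 * nu (4 * ξ - 1)) := by
      simp only [alphahat, ha]
      rw [if_neg (by push_neg; linarith), if_pos (by linarith)]
    have e4 : b1hat ξ = Real.cos (Real.pi / 2 * nu (4 * ξ - 1)) := by
      simp only [b1hat, ha]
      rw [if_neg (by push_neg; linarith), if_neg (by push_neg; linarith),
        if_pos (by linarith)]
    have e5 : beta1hat (2*ξ) = Real.cos (Real.pi / 2 * nu (2 * (2*ξ) - 1)) ^ 2 := by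
      simp only [beta1hat, ha2]
      rw [if_neg (by rintro ⟨-, hx⟩; linarith), if_pos ⟨by linarith, by linarith⟩]
    have e6 : beta2hat (2*ξ) =
        Real.cos (Real.pi / 2 * nu (2 * (2*ξ) - 1)) *
          Real.sin (Real.pi / 2 * nu (2 * (2*ξ) - 1)) := by
      simp only [beta2hat, ha2]
      rw [if_pos ⟨by linarith, by linarith⟩]
    have e7 : b2hat ξ = Real.sin (Real.pi / 2 * nu (4 * ξ - 1)) := by
      simp only [b2hat, ha]
      rw [if_neg (by push_neg; linarith), if_pos (by linarith)]
    have harg : 2 * (2*ξ) - 1 = 4 * ξ - 1 := by ring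
    refine ⟨?_, ?_, ?_⟩
    · rw [e1, e2, zero_mul]
    · rw [e5, e4, e3, harg]; ring
    · rw [e6, e7, e3, harg]; ring
end

section
/- Suppose for each j the quadrature rule Q_{N_j} integrates exactly all products P_ℓ·conj(P_{ℓ'}) with λ_ℓ, λ_{ℓ'} ≤ 2^{j−1} (i.e., Σ_k ω_{j,k} P_ℓ(x_{j,k}) conj(P_{ℓ'}(x_{j,k})) = δ_{ℓℓ'}), and the masks satisfy |â(λ_ℓ/2^j)|² + Σ_{n=1}^r |b̂_n(λ_ℓ/2^j)|² = 1 for all j, ℓ, with supp(α̂), supp(β̂^n) ⊆ [0,1/2] and the refinement relations α̂(2ξ) = â(ξ)α̂(ξ), β̂^n(2ξ) = b̂_n(ξ)α̂(ξ). Then for every f ∈ L²(T²) and every j ≥ 0: Σ_{k=1}^{N_{j+1}} |⟨f, φ_{j+1,k}⟩|² = Σ_{k=1}^{N_j} |⟨f, φ_{j,k}⟩|² + Σ_{k=1}^{N_{j+1}} Σ_{n=1}^r |⟨f, ψ^n_{j,k}⟩|². -/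
/-!
Exactness of the quadrature turns the sum over the nodes of level `j` into Parseval's identity
on the finitely many active degrees: `Σ_k |⟨f, φ_{j,k}⟩|² = Σ_ℓ |α̂(λ_ℓ/2^j)|² |⟨f, P_ℓ⟩|²`, and
likewise for `ψ^n_{j,k}` with `β̂^n`. Refinement and tightness give
`|α̂(2ξ)|² + Σ_n |β̂^n(2ξ)|² = |α̂(ξ)|²` at `ξ = λ_ℓ/2^{j+1}`, and the degrees active at level
`j + 1` but not at level `j` have `λ_ℓ/2^j > 1/2`, where `α̂` and every `β̂^n` vanish.
-/

open Finset ComplexConjugate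

theorem sum_mul_norm_sum_sq_eq_of_exact {ι κ : Type*} [DecidableEq ι] (s : Finset ι)
    (K : Finset κ) (w : κ → ℝ) (e : ι → κ → ℂ)
    (hexact : ∀ ℓ ∈ s, ∀ ℓ' ∈ s,
      ∑ k ∈ K, (w k : ℂ) * e ℓ k * conj (e ℓ' k) = if ℓ = ℓ' then 1 else 0)
    (c : ι → ℂ) :
    ∑ k ∈ K, w k * ‖∑ ℓ ∈ s, c ℓ * e ℓ k‖ ^ 2 = ∑ ℓ ∈ s, ‖c ℓ‖ ^ 2 := by
  apply Complex.ofReal_injective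
  push_cast
  simp_rw [← Complex.mul_conj']
  calc ∑ k ∈ K, (w k : ℂ) * ((∑ ℓ ∈ s, c ℓ * e ℓ k) * conj (∑ ℓ ∈ s, c ℓ * e ℓ k))
      = ∑ ℓ ∈ s, ∑ ℓ' ∈ s, c ℓ * conj (c ℓ') *
          ∑ k ∈ K, (w k : ℂ) * e ℓ k * conj (e ℓ' k) := by
        simp_rw [map_sum, sum_mul_sum, mul_sum]
        rw [sum_comm]
        refine sum_congr rfl fun ℓ _ => ?_
        rw [sum_comm]
        refine sum_congr rfl fun ℓ' _ => sum_congr rfl fun k _ => ?_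
        simp only [map_mul]
        ring
    _ = ∑ ℓ ∈ s, c ℓ * conj (c ℓ) := by
        refine sum_congr rfl fun ℓ hℓ => ?_
        rw [sum_congr rfl fun ℓ' hℓ' => by rw [hexact ℓ hℓ ℓ' hℓ']]
        simp [hℓ]

theorem sum_norm_inner_quadrature_sq_eq {H ι κ : Type*} [NormedAddCommGroup H]
    [InnerProductSpace ℂ H] [DecidableEq ι] (v : ι → H) (f : H) (s : Finset ι)
    (K : Finset κ) (w : κ → ℝ) (hw : ∀ k ∈ K, 0 ≤ w k) (e : ι → κ → ℂ)
    (hexact : ∀ ℓ ∈ s, ∀ ℓ' ∈ s,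
      ∑ k ∈ K, (w k : ℂ) * e ℓ k * conj (e ℓ' k) = if ℓ = ℓ' then 1 else 0)
    (g : ι → ℂ) :
    ∑ k ∈ K, ‖inner ℂ ((Real.sqrt (w k) : ℂ) • ∑ ℓ ∈ s, (g ℓ * conj (e ℓ k)) • v ℓ) f‖ ^ 2
      = ∑ ℓ ∈ s, ‖g ℓ‖ ^ 2 * ‖inner ℂ (v ℓ) f‖ ^ 2 := by
  have hinner : ∀ k ∈ K,
      ‖inner ℂ ((Real.sqrt (w k) : ℂ) • ∑ ℓ ∈ s, (g ℓ * conj (e ℓ k)) • v ℓ) f‖ ^ 2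
        = w k * ‖∑ ℓ ∈ s, (conj (g ℓ) * inner ℂ (v ℓ) f) * e ℓ k‖ ^ 2 := by
    intro k hk
    simp only [inner_smul_left, sum_inner, map_mul, Complex.conj_conj, Complex.conj_ofReal,
      norm_mul, mul_pow, Complex.norm_real, Real.norm_eq_abs, sq_abs,
      Real.sq_sqrt (hw k hk)]
    simp only [mul_right_comm]
  rw [sum_congr rfl hinner, sum_mul_norm_sum_sq_eq_of_exact s K w e hexact]
  simp only [norm_mul, mul_pow, Complex.norm_conj]

theorem norm_sq_add_sum_norm_sq_of_refinement {ι : Type*} (R : Finset ι) (a α : ℝ → ℂ)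
    (b β : ι → ℝ → ℂ) (ξ : ℝ) (hα : α (2 * ξ) = a ξ * α ξ)
    (hβ : ∀ n ∈ R, β n (2 * ξ) = b n ξ * α ξ)
    (htight : ‖a ξ‖ ^ 2 + ∑ n ∈ R, ‖b n ξ‖ ^ 2 = 1) :
    ‖α (2 * ξ)‖ ^ 2 + ∑ n ∈ R, ‖β n (2 * ξ)‖ ^ 2 = ‖α ξ‖ ^ 2 := by
  rw [sum_congr rfl fun n hn => by rw [hβ n hn, norm_mul, mul_pow], ← sum_mul, hα, norm_mul,
    mul_pow, ← add_mul, htight, one_mul]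

theorem natCast_le_sqrt_mul_add_two (ℓ : ℕ) : (ℓ : ℝ) ≤ Real.sqrt (ℓ * (ℓ + 2)) :=
  Real.le_sqrt_of_sq_le (by nlinarith [ℓ.cast_nonneg (α := ℝ)])

theorem div_two_pow_le_half_iff (y : ℝ) (j : ℕ) :
    y / 2 ^ j ≤ 1 / 2 ↔ y ≤ (2 : ℝ) ^ ((j : ℤ) - 1) := by
  rw [zpow_sub_one₀ two_ne_zero, zpow_natCast, div_le_iff₀ (by positivity)]
  ring_nf

noncomputable def spectralWindow (lam : ℕ → ℝ) (j : ℕ) : Finset ℕ :=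
  (range (2 ^ (j + 1))).filter fun ℓ => lam ℓ ≤ (2 : ℝ) ^ ((j : ℤ) - 1)

theorem mem_spectralWindow_iff {lam : ℕ → ℝ} (hlam : ∀ ℓ : ℕ, (ℓ : ℝ) ≤ lam ℓ) {j ℓ : ℕ} :
    ℓ ∈ spectralWindow lam j ↔ lam ℓ ≤ (2 : ℝ) ^ ((j : ℤ) - 1) := by
  refine mem_filter.trans ⟨And.right, fun h => ⟨mem_range.mpr ?_, h⟩⟩
  have h2 : (2 : ℝ) ^ ((j : ℤ) - 1) < 2 ^ (j + 1) := by
    rw [← zpow_natCast]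
    exact zpow_lt_zpow_right₀ one_lt_two (by push_cast; omega)
  exact_mod_cast (hlam ℓ).trans_lt (h.trans_lt h2)

theorem spectralWindow_subset_succ {lam : ℕ → ℝ} (hlam : ∀ ℓ : ℕ, (ℓ : ℝ) ≤ lam ℓ) (j : ℕ) :
    spectralWindow lam j ⊆ spectralWindow lam (j + 1) := fun ℓ hℓ => by
  rw [mem_spectralWindow_iff hlam] at hℓ ⊢
  exact hℓ.trans (zpow_le_zpow_right₀ one_le_two (by push_cast; omega))

open Finset in
/-- Here `H = L²(T²)`, `Pvec ℓ` is the `ℓ`-th orthonormal basis element of `L²(T²)` and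
`P ℓ t` its value at `t ∈ T²`; since `α̂` and the `β̂ⁿ` are supported in `[0,1/2]`,
the framelets `φ_{j,k}` and `ψ^n_{j,k}` are the finite sums below (only degrees with
`λ_ℓ ≤ 2^{j-1} < 2^{j+1}` contribute, as `λ_ℓ ≥ ℓ`). -/
theorem framelet_coefficient_norm_identity_general
    {H : Type*} [NormedAddCommGroup H] [InnerProductSpace ℂ H] {T : Type*}
    (Pvec : ℕ → H)
    (P : ℕ → T → ℂ) (x : ℕ → ℕ → T) (ω : ℕ → ℕ → ℝ) (N : ℕ → ℕ)
    (lam : ℕ → ℝ) (hlam : ∀ ℓ : ℕ, lam ℓ = Real.sqrt (ℓ * (ℓ + 2)))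
    (r : ℕ) (ahat : ℝ → ℂ) (bhat : ℕ → ℝ → ℂ) (alphahat : ℝ → ℂ) (betahat : ℕ → ℝ → ℂ)
    -- the quadrature rule `Q_{N_j}` integrates `P_ℓ ⬝ conj(P_ℓ')` exactly
    (hquad : ∀ j ℓ ℓ' : ℕ, lam ℓ ≤ (2 : ℝ) ^ ((j : ℤ) - 1) →
      lam ℓ' ≤ (2 : ℝ) ^ ((j : ℤ) - 1) →
      ∑ k ∈ range (N j), (ω j k : ℂ) * P ℓ (x j k) * starRingEnd ℂ (P ℓ' (x j k)) =
        if ℓ = ℓ' then 1 else 0)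
    -- tightness condition on the masks
    (htight : ∀ j ℓ : ℕ, ‖ahat (lam ℓ / 2 ^ j)‖ ^ 2
        + ∑ n ∈ range r, ‖bhat n (lam ℓ / 2 ^ j)‖ ^ 2 = 1)
    -- support conditions
    (hsuppα : ∀ ξ : ℝ, ξ ∉ Set.Icc (0 : ℝ) (1 / 2) → alphahat ξ = 0)
    (hsuppβ : ∀ n : ℕ, ∀ ξ : ℝ, ξ ∉ Set.Icc (0 : ℝ) (1 / 2) → betahat n ξ = 0)
    -- refinement relations
    (hrefα : ∀ ξ : ℝ, alphahat (2 * ξ) = ahat ξ * alphahat ξ)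
    (hrefβ : ∀ n : ℕ, ∀ ξ : ℝ, betahat n (2 * ξ) = bhat n ξ * alphahat ξ)
    -- positive quadrature weights
    (hω : ∀ j k : ℕ, 0 ≤ ω j k)
    (f : H) (j : ℕ) :
    let S : ℕ → Finset ℕ := fun j' =>
      (range (2 ^ (j' + 1))).filter fun ℓ => lam ℓ ≤ (2 : ℝ) ^ ((j' : ℤ) - 1)
    let φ : ℕ → ℕ → H := fun j' k => (Real.sqrt (ω j' k) : ℂ) •
      ∑ ℓ ∈ S j', (alphahat (lam ℓ / 2 ^ j') * starRingEnd ℂ (P ℓ (x j' k))) • Pvec ℓ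
    let ψ : ℕ → ℕ → ℕ → H := fun n j' k => (Real.sqrt (ω (j' + 1) k) : ℂ) •
      ∑ ℓ ∈ S j', (betahat n (lam ℓ / 2 ^ j') * starRingEnd ℂ (P ℓ (x (j' + 1) k))) • Pvec ℓ
    ∑ k ∈ range (N (j + 1)), ‖(inner ℂ (φ (j + 1) k) f : ℂ)‖ ^ 2 =
      ∑ k ∈ range (N j), ‖(inner ℂ (φ j k) f : ℂ)‖ ^ 2 +
        ∑ k ∈ range (N (j + 1)), ∑ n ∈ range r,
          ‖(inner ℂ (ψ n j k) f : ℂ)‖ ^ 2 := by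
  intro S φ ψ
  have hle : ∀ ℓ : ℕ, (ℓ : ℝ) ≤ lam ℓ := fun ℓ => hlam ℓ ▸ natCast_le_sqrt_mul_add_two ℓ
  have hmem : ∀ {j' ℓ}, ℓ ∈ S j' ↔ lam ℓ ≤ (2 : ℝ) ^ ((j' : ℤ) - 1) := mem_spectralWindow_iff hle
  have hexact : ∀ j', ∀ ℓ ∈ S j', ∀ ℓ' ∈ S j', _ := fun j' ℓ hℓ ℓ' hℓ' =>
    hquad j' ℓ ℓ' (hmem.mp hℓ) (hmem.mp hℓ')
  have hsub : S j ⊆ S (j + 1) := spectralWindow_subset_succ hle j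
  set c : ℕ → ℝ := fun ℓ => ‖inner ℂ (Pvec ℓ) f‖ ^ 2
  set m : ℕ → ℝ := fun ℓ => ‖alphahat (lam ℓ / 2 ^ j)‖ ^ 2
    + ∑ n ∈ range r, ‖betahat n (lam ℓ / 2 ^ j)‖ ^ 2
  have hrefine : ∀ ℓ, m ℓ = ‖alphahat (lam ℓ / 2 ^ (j + 1))‖ ^ 2 := fun ℓ => by
    have h2 : lam ℓ / 2 ^ j = 2 * (lam ℓ / 2 ^ (j + 1)) := by rw [pow_succ]; field_simp
    simp only [m, h2]
    exact norm_sq_add_sum_norm_sq_of_refinement _ _ _ _ _ _ (hrefα _)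
      (fun n _ => hrefβ n _) (htight (j + 1) ℓ)
  have hcoarse : ∀ ℓ ∈ S (j + 1), ℓ ∉ S j → m ℓ * c ℓ = 0 := fun ℓ _ hℓ => by
    have hξ : lam ℓ / 2 ^ j ∉ Set.Icc (0 : ℝ) (1 / 2) := fun h =>
      hℓ (hmem.mpr ((div_two_pow_le_half_iff _ j).mp h.2))
    simp [m, hsuppα _ hξ, hsuppβ _ _ hξ]
  calc ∑ k ∈ range (N (j + 1)), ‖inner ℂ (φ (j + 1) k) f‖ ^ 2
      = ∑ ℓ ∈ S (j + 1), ‖alphahat (lam ℓ / 2 ^ (j + 1))‖ ^ 2 * c ℓ :=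
        sum_norm_inner_quadrature_sq_eq _ _ _ _ _ (fun k _ => hω _ k) _ (hexact (j + 1)) _
    _ = ∑ ℓ ∈ S j, m ℓ * c ℓ := by simp only [← hrefine, (sum_subset hsub hcoarse).symm]
    _ = _ := by
        rw [sum_comm, sum_congr rfl fun n _ => sum_norm_inner_quadrature_sq_eq _ _ _ _ _
          (fun k _ => hω _ k) _ (fun ℓ hℓ ℓ' hℓ' => hexact (j + 1) ℓ (hsub hℓ) ℓ' (hsub hℓ')) _,
          sum_norm_inner_quadrature_sq_eq _ _ _ _ _ (fun k _ => hω _ k) _ (hexact j) _,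
          sum_comm, ← sum_add_distrib]
        simp only [m, c, add_mul, sum_mul]

open Finset in
/-- Multiscale identity for framelet coefficients between adjacent levels: if the
quadrature rules are exact for the relevant products of basis functions and the masks
satisfy the tightness condition together with the refinement relations, then
`Σ_k |⟨f, φ_{j+1,k}⟩|² = Σ_k |⟨f, φ_{j,k}⟩|² + Σ_k Σ_n |⟨f, ψ^n_{j,k}⟩|²`.
Here `H = L²(T²)`, `Pvec ℓ` is the `ℓ`-th orthonormal basis element of `L²(T²)` and
`P ℓ t` its value at `t ∈ T²`; since `α̂` and the `β̂ⁿ` are supported in `[0,1/2]`,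
the framelets `φ_{j,k}` and `ψ^n_{j,k}` are the finite sums below (only degrees with
`λ_ℓ ≤ 2^{j-1} < 2^{j+1}` contribute, as `λ_ℓ ≥ ℓ`). -/
theorem framelet_coefficient_norm_identity
    {H : Type*} [NormedAddCommGroup H] [InnerProductSpace ℂ H] {T : Type*}
    (Pvec : ℕ → H) (hP : Orthonormal ℂ Pvec)
    (P : ℕ → T → ℂ) (x : ℕ → ℕ → T) (ω : ℕ → ℕ → ℝ) (N : ℕ → ℕ)
    (lam : ℕ → ℝ) (hlam : ∀ ℓ : ℕ, lam ℓ = Real.sqrt (ℓ * (ℓ + 2)))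
    (r : ℕ) (ahat : ℝ → ℂ) (bhat : ℕ → ℝ → ℂ) (alphahat : ℝ → ℂ) (betahat : ℕ → ℝ → ℂ)
    -- the quadrature rule `Q_{N_j}` integrates `P_ℓ ⬝ conj(P_ℓ')` exactly
    (hquad : ∀ j ℓ ℓ' : ℕ, lam ℓ ≤ (2 : ℝ) ^ ((j : ℤ) - 1) →
      lam ℓ' ≤ (2 : ℝ) ^ ((j : ℤ) - 1) →
      ∑ k ∈ range (N j), (ω j k : ℂ) * P ℓ (x j k) * starRingEnd ℂ (P ℓ' (x j k)) =
        if ℓ = ℓ' then 1 else 0)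
    -- tightness condition on the masks
    (htight : ∀ j ℓ : ℕ, ‖ahat (lam ℓ / 2 ^ j)‖ ^ 2
        + ∑ n ∈ range r, ‖bhat n (lam ℓ / 2 ^ j)‖ ^ 2 = 1)
    -- support conditions
    (hsuppα : ∀ ξ : ℝ, ξ ∉ Set.Icc (0 : ℝ) (1 / 2) → alphahat ξ = 0)
    (hsuppβ : ∀ n : ℕ, ∀ ξ : ℝ, ξ ∉ Set.Icc (0 : ℝ) (1 / 2) → betahat n ξ = 0)
    -- refinement relations
    (hrefα : ∀ ξ : ℝ, alphahat (2 * ξ) = ahat ξ * alphahat ξ)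
    (hrefβ : ∀ n : ℕ, ∀ ξ : ℝ, betahat n (2 * ξ) = bhat n ξ * alphahat ξ)
    -- positive quadrature weights
    (hω : ∀ j k : ℕ, 0 ≤ ω j k)
    (f : H) (j : ℕ) :
    let S : ℕ → Finset ℕ := fun j' =>
      (range (2 ^ (j' + 1))).filter fun ℓ => lam ℓ ≤ (2 : ℝ) ^ ((j' : ℤ) - 1)
    let φ : ℕ → ℕ → H := fun j' k => (Real.sqrt (ω j' k) : ℂ) •
      ∑ ℓ ∈ S j', (alphahat (lam ℓ / 2 ^ j') * starRingEnd ℂ (P ℓ (x j' k))) • Pvec ℓ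
    let ψ : ℕ → ℕ → ℕ → H := fun n j' k => (Real.sqrt (ω (j' + 1) k) : ℂ) •
      ∑ ℓ ∈ S j', (betahat n (lam ℓ / 2 ^ j') * starRingEnd ℂ (P ℓ (x (j' + 1) k))) • Pvec ℓ
    ∑ k ∈ range (N (j + 1)), ‖(inner ℂ (φ (j + 1) k) f : ℂ)‖ ^ 2 =
      ∑ k ∈ range (N j), ‖(inner ℂ (φ j k) f : ℂ)‖ ^ 2 +
        ∑ k ∈ range (N (j + 1)), ∑ n ∈ range r,
          ‖(inner ℂ (ψ n j k) f : ℂ)‖ ^ 2 :=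
  framelet_coefficient_norm_identity_general Pvec P x ω N lam hlam r ahat bhat alphahat betahat
    hquad htight hsuppα hsuppβ hrefα hrefβ hω f j
end
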